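/- Under the hypotheses of the previous transport identity, for each t ≥ t₁: ∫_ℝ ∫_{S^{n-1}} |m(t,s,ω)|² ds dω ≥ ∫_{2ρ}^∞ ∫_{S^{n-1}} |m(t₁,s,ω)|² ds dω. Consequently, if ‖m(t_k,·,·)‖_{L²} → 0 along a sequence t_k → ∞, then m(t₁, s, ω) = 0 for s ≥ 2ρ and almost every ω. -/

import Mathlib

/-!
On each characteristic `u ↦ (t₁ + u, s + τ(ω) u)` issued from `s ≥ 2ρ` the source `l` vanishes,
so `m` is constant there: `m(t, s + τ(ω)(t - t₁), ω) = m(t₁, s, ω)`. Hence `m(t₁, ·, ω)` on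
`(2ρ, ∞)` is a translate of (part of) `m(t, ·, ω)`, and translation invariance of Lebesgue
measure gives the `L²` inequality. A constant bounded by a sequence tending to `0` is `0`,
which forces `m(t₁, ·, ·)` to vanish almost everywhere on `{s > 2ρ}`.
-/

open MeasureTheory Filter Set
open scoped ENNReal

section Characteristics

variable {E : Type*} [NormedAddCommGroup E] [NormedSpace ℝ E]

theorem hasDerivAt_of_hasDerivAt_const_add_zero {g : ℝ → E} {g' : E} {x : ℝ}
    (h : HasDerivAt (fun u => g (x + u)) g' 0) : HasDerivAt g g' x := by
  have := HasDerivAt.comp_sub_const x x (by rwa [sub_self])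
  simpa only [add_sub_cancel] using this

theorem eq_of_hasDerivAt_zero_along_characteristics (m : ℝ → ℝ → E) {c a t₀ : ℝ}
    (hm : ∀ t s, t₀ ≤ t → a + c * (t - t₀) ≤ s →
      HasDerivAt (fun u => m (t + u) (s + c * u)) 0 0)
    {t s : ℝ} (ht : t₀ ≤ t) (hs : a ≤ s) :
    m t (s + c * (t - t₀)) = m t₀ s := by
  have hderiv : ∀ u, 0 ≤ u → HasDerivAt (fun u => m (t₀ + u) (s + c * u)) 0 u := by
    intro u hu
    apply hasDerivAt_of_hasDerivAt_const_add_zero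
    have := hm (t₀ + u) (s + c * u) (by linarith) (by rw [add_sub_cancel_left]; linarith)
    simpa only [add_assoc, mul_add] using this
  have := constant_of_has_deriv_right_zero
    (fun x hx => (hderiv x hx.1).continuousAt.continuousWithinAt)
    (fun x hx => (hderiv x hx.1).hasDerivWithinAt) (t - t₀) ⟨sub_nonneg.2 ht, le_rfl⟩
  simpa using this

end Characteristics

theorem setLIntegral_comp_add_right_le {G : Type*} [MeasurableSpace G] [AddGroup G]
    [MeasurableAdd G] (μ : Measure G) [μ.IsAddRightInvariant] (f : G → ℝ≥0∞) (S : Set G)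
    (c : G) : ∫⁻ x in S, f (x + c) ∂μ ≤ ∫⁻ x, f x ∂μ :=
  (setLIntegral_le_lintegral S _).trans_eq (lintegral_add_right_eq_self f c)

theorem lintegral_lintegral_Ioi_nnnorm_sq_le_of_hasDerivAt_zero {Ω E : Type*}
    [MeasurableSpace Ω] [NormedAddCommGroup E] [NormedSpace ℝ E] (μ : Measure Ω) (τ : Ω → ℝ)
    (m : ℝ → ℝ → Ω → E) {a t₀ t : ℝ}
    (hm : ∀ ω t s, t₀ ≤ t → a + τ ω * (t - t₀) ≤ s →
      HasDerivAt (fun u => m (t + u) (s + τ ω * u) ω) 0 0)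
    (ht : t₀ ≤ t) :
    ∫⁻ ω, ∫⁻ s in Ioi a, (‖m t₀ s ω‖₊ : ℝ≥0∞) ^ 2 ∂volume ∂μ ≤
      ∫⁻ ω, ∫⁻ s, (‖m t s ω‖₊ : ℝ≥0∞) ^ 2 ∂volume ∂μ := by
  refine lintegral_mono fun ω => ?_
  calc ∫⁻ s in Ioi a, (‖m t₀ s ω‖₊ : ℝ≥0∞) ^ 2
      = ∫⁻ s in Ioi a, (‖m t (s + τ ω * (t - t₀)) ω‖₊ : ℝ≥0∞) ^ 2 := by
        refine setLIntegral_congr_fun measurableSet_Ioi fun s hs => ?_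
        rw [eq_of_hasDerivAt_zero_along_characteristics (fun t s => m t s ω) (hm ω) ht
          (le_of_lt hs)]
    _ ≤ ∫⁻ s, (‖m t s ω‖₊ : ℝ≥0∞) ^ 2 := setLIntegral_comp_add_right_le volume _ _ _

theorem ae_ae_eq_zero_of_lintegral_lintegral_nnnorm_sq_eq_zero {α β E : Type*}
    [MeasurableSpace α] [MeasurableSpace β] [NormedAddCommGroup E] [MeasurableSpace E]
    [OpensMeasurableSpace E] {μ : Measure β} {ν : Measure α} [SFinite ν] {f : α → β → E}
    (hf : Measurable fun p : α × β => f p.1 p.2)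
    (h : ∫⁻ y, ∫⁻ x, (‖f x y‖₊ : ℝ≥0∞) ^ 2 ∂ν ∂μ = 0) :
    ∀ᵐ y ∂μ, ∀ᵐ x ∂ν, f x y = 0 := by
  have hF : Measurable fun p : α × β => (‖f p.1 p.2‖₊ : ℝ≥0∞) ^ 2 :=
    hf.nnnorm.coe_nnreal_ennreal.pow_const 2
  filter_upwards [(lintegral_eq_zero_iff hF.lintegral_prod_left').1 h] with y hy
  filter_upwards [(lintegral_eq_zero_iff (hF.comp measurable_prodMk_right)).1 hy] with x hx
  simpa using hx

theorem transport_L2_monotonicity_and_vanishing_general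
    {Ω : Type*} [MeasurableSpace Ω] (μ : Measure Ω)
    (τ : Ω → ℝ)
    (ρ t₁ : ℝ)
    (m l : ℝ → ℝ → Ω → ℂ)
    (hmeas : ∀ t : ℝ, Measurable (fun p : ℝ × Ω => m t p.1 p.2))
    (hpde : ∀ ω : Ω, ∀ t s : ℝ,
      HasDerivAt (fun u : ℝ => m (t + u) (s + τ ω * u) ω) (l t s ω) 0)
    (hl : ∀ ω : Ω, ∀ t s : ℝ, t₁ ≤ t → 2 * ρ + τ ω * (t - t₁) ≤ s → l t s ω = 0) :
    (∀ t : ℝ, t₁ ≤ t →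
      (∫⁻ ω, ∫⁻ s in Set.Ioi (2 * ρ), (‖m t₁ s ω‖₊ : ENNReal) ^ 2 ∂volume ∂μ) ≤
        ∫⁻ ω, ∫⁻ s, (‖m t s ω‖₊ : ENNReal) ^ 2 ∂volume ∂μ) ∧
    (∀ tk : ℕ → ℝ, Tendsto tk atTop atTop → (∀ k, t₁ ≤ tk k) →
      Tendsto (fun k => ∫⁻ ω, ∫⁻ s, (‖m (tk k) s ω‖₊ : ENNReal) ^ 2 ∂volume ∂μ)
        atTop (nhds 0) →
      ∀ᵐ ω ∂μ, ∀ᵐ s ∂(volume.restrict (Set.Ioi (2 * ρ))), m t₁ s ω = 0) := by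
  have hchar : ∀ ω t s, t₁ ≤ t → 2 * ρ + τ ω * (t - t₁) ≤ s →
      HasDerivAt (fun u => m (t + u) (s + τ ω * u) ω) 0 0 := fun ω t s ht hs =>
    hl ω t s ht hs ▸ hpde ω t s
  have hmono : ∀ t, t₁ ≤ t →
      ∫⁻ ω, ∫⁻ s in Ioi (2 * ρ), (‖m t₁ s ω‖₊ : ℝ≥0∞) ^ 2 ∂volume ∂μ ≤
        ∫⁻ ω, ∫⁻ s, (‖m t s ω‖₊ : ℝ≥0∞) ^ 2 ∂volume ∂μ := fun t ht =>
    lintegral_lintegral_Ioi_nnnorm_sq_le_of_hasDerivAt_zero μ τ m hchar ht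
  refine ⟨hmono, fun tk _ htk hzero => ?_⟩
  refine ae_ae_eq_zero_of_lintegral_lintegral_nnnorm_sq_eq_zero (hmeas t₁) ?_
  exact nonpos_iff_eq_zero.1 (ge_of_tendsto' hzero fun k => hmono (tk k) (htk k))

/-- Under the transport hypotheses `(∂_t + τ(ω) ∂_s) m = l` with
`l(t,s,ω) = 0` for `t ≥ t₁`, `s ≥ 2ρ + τ(ω)(t - t₁)`, the `L²` norm of
`m(t,·,·)` dominates the `L²` norm of `m(t₁,·,·)` on `{s ≥ 2ρ}`; hence if the
`L²` norms vanish along a sequence `t_k → ∞`, then `m(t₁,s,ω) = 0` for a.e.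
`s ≥ 2ρ` and a.e. `ω`. -/
theorem transport_L2_monotonicity_and_vanishing
    {Ω : Type*} [MeasurableSpace Ω] (μ : Measure Ω)
    (τ : Ω → ℝ) (hτ : ∀ ω, 0 < τ ω) (hτmeas : Measurable τ)
    (v : ℝ) (hv : 0 < v) (hvτ : ∀ ω, v ≤ τ ω)
    (ρ t₁ : ℝ) (hρ : 0 < ρ) (ht₁ : 0 ≤ t₁)
    (m l : ℝ → ℝ → Ω → ℂ)
    (hmeas : ∀ t : ℝ, Measurable (fun p : ℝ × Ω => m t p.1 p.2))
    (hpde : ∀ ω : Ω, ∀ t s : ℝ,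
      HasDerivAt (fun u : ℝ => m (t + u) (s + τ ω * u) ω) (l t s ω) 0)
    (hl : ∀ ω : Ω, ∀ t s : ℝ, t₁ ≤ t → 2 * ρ + τ ω * (t - t₁) ≤ s → l t s ω = 0) :
    (∀ t : ℝ, t₁ ≤ t →
      (∫⁻ ω, ∫⁻ s in Set.Ioi (2 * ρ), (‖m t₁ s ω‖₊ : ENNReal) ^ 2 ∂volume ∂μ) ≤
        ∫⁻ ω, ∫⁻ s, (‖m t s ω‖₊ : ENNReal) ^ 2 ∂volume ∂μ) ∧
    (∀ tk : ℕ → ℝ, Tendsto tk atTop atTop → (∀ k, t₁ ≤ tk k) →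
      Tendsto (fun k => ∫⁻ ω, ∫⁻ s, (‖m (tk k) s ω‖₊ : ENNReal) ^ 2 ∂volume ∂μ)
        atTop (nhds 0) →
      ∀ᵐ ω ∂μ, ∀ᵐ s ∂(volume.restrict (Set.Ioi (2 * ρ))), m t₁ s ω = 0) :=
  transport_L2_monotonicity_and_vanishing_general μ τ ρ t₁ m l hmeas hpde hl
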